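/- arXiv:1708.02890 — 2 statements merged into one kernel-verified Lean document; each statement's English description precedes it below -/
import Mathlib

section
/- Under the hypotheses that K_P(m,w) = w + K_Q(m,w) for all (m,w) (with the convention ∞ + w = ∞), K_P and K_Q are good rate functions with the same effective domain, and I_P(w) = inf_m K_P(m,w) has unique zero 0, every minimizer m* of m ↦ K_P(m, 0) satisfies both J_P(m*) = 0 and J_Q(m*) = 0, where J_P(m) = inf_w K_P(m,w) and J_Q(m) = inf_w K_Q(m,w). -/
/-- Forward inclusion step: under the fluctuation symmetry `K_P(m,w) = w + K_Q(m,w)`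
(with `∞ + w = ∞`), same effective domains, and `I_P` having unique zero `0`, every
minimizer `m*` of `m ↦ K_P(m, 0)` satisfies `J_P(m*) = 0` and `J_Q(m*) = 0`. -/
theorem minimizer_is_common_zero
    {M : Type*} [MetricSpace M]
    (K_P K_Q : M × ℝ → EReal)
    (hKP_nonneg : ∀ x, 0 ≤ K_P x) (hKQ_nonneg : ∀ x, 0 ≤ K_Q x)
    (hKP_lsc : LowerSemicontinuous K_P) (hKQ_lsc : LowerSemicontinuous K_Q)
    (hKP_compact : ∀ c : ℝ, IsCompact {x : M × ℝ | K_P x ≤ (c : EReal)})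
    (hKQ_compact : ∀ c : ℝ, IsCompact {x : M × ℝ | K_Q x ≤ (c : EReal)})
    (hsym : ∀ m : M, ∀ w : ℝ, K_P (m, w) = (w : EReal) + K_Q (m, w))
    (hdom : ∀ x : M × ℝ, K_P x = ⊤ ↔ K_Q x = ⊤)
    (hIP : ∀ w : ℝ, (⨅ m : M, K_P (m, w)) = 0 ↔ w = 0) :
    ∀ mstar : M, (∀ m : M, K_P (mstar, 0) ≤ K_P (m, 0)) →
      (⨅ w : ℝ, K_P (mstar, w)) = 0 ∧ (⨅ w : ℝ, K_Q (mstar, w)) = 0 := by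
  intro mstar hmin
  have h0 : (⨅ m : M, K_P (m, 0)) = 0 := (hIP 0).mpr rfl
  have hP0 : K_P (mstar, 0) = 0 :=
    le_antisymm (h0 ▸ le_iInf hmin) (hKP_nonneg _)
  have hQ0 : K_Q (mstar, 0) = 0 := by
    have h := hsym mstar 0
    rw [hP0] at h
    simpa using h.symm
  constructor
  · exact le_antisymm ((iInf_le _ 0).trans_eq hP0) (le_iInf fun w => hKP_nonneg _)
  · exact le_antisymm ((iInf_le _ 0).trans_eq hQ0) (le_iInf fun w => hKQ_nonneg _)
end

section
/- Let X_1,…,X_n be an ergodic finite-state Markov chain with transition matrix p, invariant distribution μ, and initial distribution ρ; let P_n be its path law and Q_n the path law of the Markov chain with transition matrix q and the same initial distribution ρ, where q(x,y) > 0 whenever p(x,y) > 0. Then the normalized relative entropy converges: (1/n) D(P_n‖Q_n) → Σ_{x,y} μ(x) p(x,y) log(p(x,y)/q(x,y)) as n → ∞. -/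
/-!
The log-likelihood ratio of a path is the sum of its one-step ratios `log (p / q)`, so
`D(P_n ‖ Q_n)` is the sum over times `i < n` of the mean one-step ratio under the time-`i`
marginal `ρ pⁱ`. If some power `pᵏ` is entrywise positive, Doeblin's argument shows that `pᵏ`
contracts zero-sum vectors in `ℓ¹` by a factor `< 1`, so `ρ pⁱ → μ`; the normalized relative
entropy is then a Cesàro mean of a convergent sequence.
-/

open Filter Topology Finset

theorem tendsto_zero_of_antitone_of_le_mul {d : ℕ → ℝ} (hd0 : ∀ n, 0 ≤ d n) (hd : Antitone d)
    {k : ℕ} {r : ℝ} (hr : r < 1) (hdr : ∀ n, d (n + k) ≤ r * d n) :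
    Tendsto d atTop (𝓝 0) := by
  have hL := tendsto_atTop_ciInf hd ⟨0, by rintro _ ⟨n, rfl⟩; exact hd0 n⟩
  set L := ⨅ n, d n
  have hL0 : 0 ≤ L := ge_of_tendsto' hL hd0
  have hLr : L ≤ r * L :=
    le_of_tendsto_of_tendsto' (hL.comp (tendsto_add_atTop_nat k)) (hL.const_mul r) hdr
  have hL_eq : L = 0 := by nlinarith
  rwa [hL_eq] at hL

namespace Matrix

variable {Ω : Type*}

theorem sum_vecMul_of_sum_row_eq_one [Fintype Ω] {P : Matrix Ω Ω ℝ} (hP : ∀ x, ∑ y, P x y = 1)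
    (v : Ω → ℝ) : ∑ y, (v ᵥ* P) y = ∑ x, v x := by
  simp only [vecMul, dotProduct]
  rw [sum_comm]
  simp only [← mul_sum, hP, mul_one]

theorem sum_abs_vecMul_le [Fintype Ω] {P : Matrix Ω Ω ℝ} (hP : ∀ x, ∑ y, P x y = 1) {δ : Ω → ℝ}
    (hδ : ∀ x y, δ y ≤ P x y) {v : Ω → ℝ} (hv : ∑ x, v x = 0) :
    ∑ y, |(v ᵥ* P) y| ≤ (1 - ∑ y, δ y) * ∑ x, |v x| := by
  -- Since `∑ v = 0`, subtracting the column floor `δ y` does not change `(v ᵥ* P) y`.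
  have hshift : ∀ y, (v ᵥ* P) y = ∑ x, v x * (P x y - δ y) := fun y => by
    simp only [mul_sub, sum_sub_distrib, ← sum_mul, hv, zero_mul, sub_zero]; rfl
  calc ∑ y, |(v ᵥ* P) y|
      ≤ ∑ y, ∑ x, |v x| * (P x y - δ y) := by
        refine sum_le_sum fun y _ => (hshift y ▸ abs_sum_le_sum_abs _ _).trans ?_
        simp only [abs_mul, abs_of_nonneg (sub_nonneg.2 (hδ _ y)), le_refl]
    _ = (1 - ∑ y, δ y) * ∑ x, |v x| := by
        rw [sum_comm, mul_comm, sum_mul]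
        refine sum_congr rfl fun x _ => ?_
        rw [← mul_sum, sum_sub_distrib, hP, mul_comm]

theorem tendsto_vecMul_pow_of_sum_eq_zero [Fintype Ω] [DecidableEq Ω] [Nonempty Ω]
    {p : Matrix Ω Ω ℝ} (hp : p ∈ rowStochastic ℝ Ω) {k : ℕ} (hpos : ∀ x y, 0 < (p ^ k) x y)
    {v : Ω → ℝ} (hv : ∑ x, v x = 0) : Tendsto (fun n => v ᵥ* p ^ n) atTop (𝓝 0) := by
  set d : ℕ → ℝ := fun n => ∑ x, |(v ᵥ* p ^ n) x|
  have hsum (n : ℕ) : ∑ x, (v ᵥ* p ^ n) x = 0 :=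
    (sum_vecMul_of_sum_row_eq_one (sum_row_of_mem_rowStochastic (pow_mem hp n)) v).trans hv
  have hanti : Antitone d := antitone_nat_of_succ_le fun n => by
    simpa [d, pow_succ] using
      sum_abs_vecMul_le (sum_row_of_mem_rowStochastic hp) (δ := 0) hp.1 (hsum n)
  set δ : Ω → ℝ := fun y => univ.inf' univ_nonempty fun x => (p ^ k) x y
  have hδ : 0 < ∑ y, δ y :=
    sum_pos (fun y _ => (lt_inf'_iff _).2 fun x _ => hpos x y) univ_nonempty
  have hcontr (n : ℕ) : d (n + k) ≤ (1 - ∑ y, δ y) * d n := by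
    simpa [d, pow_add] using
      sum_abs_vecMul_le (sum_row_of_mem_rowStochastic (pow_mem hp k))
        (fun x y => inf'_le _ (mem_univ x)) (hsum n)
  have hd : Tendsto d atTop (𝓝 0) :=
    tendsto_zero_of_antitone_of_le_mul (fun n => sum_nonneg fun x _ => abs_nonneg _) hanti
      (by linarith) hcontr
  refine tendsto_pi_nhds.2 fun a => squeeze_zero_norm (fun n => ?_) hd
  exact single_le_sum (f := fun x => |(v ᵥ* p ^ n) x|) (fun x _ => abs_nonneg _) (mem_univ a)

theorem tendsto_vecMul_pow [Fintype Ω] [DecidableEq Ω] [Nonempty Ω] {p : Matrix Ω Ω ℝ}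
    (hp : p ∈ rowStochastic ℝ Ω) {k : ℕ} (hpos : ∀ x y, 0 < (p ^ k) x y) {μ : Ω → ℝ}
    (hμ : μ ᵥ* p = μ) {ρ : Ω → ℝ} (hρμ : ∑ x, ρ x = ∑ x, μ x) :
    Tendsto (fun n => ρ ᵥ* p ^ n) atTop (𝓝 μ) := by
  have hμn (n : ℕ) : μ ᵥ* p ^ n = μ := by
    induction n with
    | zero => simp
    | succ n ih => rw [pow_succ, ← vecMul_vecMul, ih, hμ]
  have := (tendsto_vecMul_pow_of_sum_eq_zero hp hpos (v := ρ - μ)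
    (by rw [Pi.sub_def, sum_sub_distrib, hρμ, sub_self])).add_const μ
  simpa [sub_vecMul, hμn] using this

def pathWeight (p : Matrix Ω Ω ℝ) (ρ : Ω → ℝ) (n : ℕ) (x : Fin (n + 1) → Ω) : ℝ :=
  ρ (x 0) * ∏ i : Fin n, p (x i.castSucc) (x i.succ)

theorem pathWeight_snoc (p : Matrix Ω Ω ℝ) (ρ : Ω → ℝ) {n : ℕ} (y : Fin (n + 1) → Ω) (b : Ω) :
    p.pathWeight ρ (n + 1) (Fin.snoc y b) = p.pathWeight ρ n y * p (y (Fin.last n)) b := by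
  simp only [pathWeight, Fin.prod_univ_castSucc, Fin.succ_castSucc, Fin.snoc_castSucc,
    Fin.succ_last, Fin.snoc_last, mul_assoc]
  rw [show (0 : Fin (n + 2)) = Fin.castSucc 0 from rfl, Fin.snoc_castSucc]

theorem sum_pathWeight_succ_mul [Fintype Ω] (p : Matrix Ω Ω ℝ) (ρ : Ω → ℝ) {n : ℕ}
    (f : (Fin (n + 2) → Ω) → ℝ) :
    ∑ x, p.pathWeight ρ (n + 1) x * f x =
      ∑ y, p.pathWeight ρ n y * ∑ b, p (y (Fin.last n)) b * f (Fin.snoc y b) := by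
  rw [← (Fin.snocEquiv fun _ => Ω).sum_comp, Fintype.sum_prod_type, sum_comm]
  refine sum_congr rfl fun y _ => ?_
  simp only [mul_sum, ← mul_assoc, ← pathWeight_snoc]
  rfl

theorem sum_pathWeight_mul_last [Fintype Ω] [DecidableEq Ω] (p : Matrix Ω Ω ℝ) (ρ : Ω → ℝ)
    (n : ℕ) (h : Ω → ℝ) :
    ∑ x, p.pathWeight ρ n x * h (x (Fin.last n)) = ∑ a, (ρ ᵥ* p ^ n) a * h a := by
  induction n generalizing h with
  | zero =>
    rw [← (Equiv.funUnique (Fin 1) Ω).symm.sum_comp]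
    simp [pathWeight, vecMul, dotProduct, one_apply]
  | succ n ih =>
    simp only [sum_pathWeight_succ_mul, Fin.snoc_last]
    rw [ih fun a => ∑ b, p a b * h b, pow_succ, ← vecMul_vecMul]
    simp only [vecMul, dotProduct, mul_sum, sum_mul, mul_assoc]
    exact sum_comm

theorem sum_pathWeight_mul_sum_steps [Fintype Ω] [DecidableEq Ω] (p : Matrix Ω Ω ℝ)
    (hp : ∀ x, ∑ y, p x y = 1) (ρ : Ω → ℝ) (g : Ω → Ω → ℝ) (n : ℕ) :
    ∑ x, p.pathWeight ρ n x * ∑ i : Fin n, g (x i.castSucc) (x i.succ) =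
      ∑ i ∈ range n, ∑ a, ∑ b, (ρ ᵥ* p ^ i) a * p a b * g a b := by
  induction n with
  | zero => simp
  | succ n ih =>
    simp only [sum_pathWeight_succ_mul, Fin.sum_univ_castSucc, Fin.succ_castSucc,
      Fin.snoc_castSucc, Fin.succ_last, Fin.snoc_last, mul_add, sum_add_distrib, ← sum_mul, hp,
      one_mul]
    rw [sum_range_succ, ih, sum_pathWeight_mul_last p ρ n fun a => ∑ b, p a b * g a b]
    simp only [mul_sum, mul_assoc]

theorem pathWeight_mul_log_div {p q : Matrix Ω Ω ℝ} (hp : ∀ x y, 0 ≤ p x y)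
    (hpq : ∀ x y, 0 < p x y → 0 < q x y) (ρ : Ω → ℝ) {n : ℕ} (x : Fin (n + 1) → Ω) :
    p.pathWeight ρ n x * Real.log (p.pathWeight ρ n x / q.pathWeight ρ n x) =
      p.pathWeight ρ n x *
        ∑ i : Fin n, Real.log (p (x i.castSucc) (x i.succ) / q (x i.castSucc) (x i.succ)) := by
  rcases eq_or_ne (p.pathWeight ρ n x) 0 with h0 | h0
  · rw [h0, zero_mul, zero_mul]
  obtain ⟨hρ, hprod⟩ := mul_ne_zero_iff.1 h0
  have hpos (i : Fin n) : 0 < p (x i.castSucc) (x i.succ) :=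
    (hp _ _).lt_of_ne' fun h => hprod (prod_eq_zero (mem_univ i) h)
  rw [pathWeight, pathWeight, mul_div_mul_left _ _ hρ, ← prod_div_distrib,
    Real.log_prod fun i _ => (div_pos (hpos i) (hpq _ _ (hpos i))).ne']

end Matrix

open Matrix

theorem markov_relative_entropy_rate_general
    {Ω : Type*} [Fintype Ω] [DecidableEq Ω] [Nonempty Ω]
    (p q : Matrix Ω Ω ℝ) (ρ μ : Ω → ℝ)
    (hρ1 : ∑ x, ρ x = 1)
    (hμ1 : ∑ x, μ x = 1)
    (hp0 : ∀ x y, 0 ≤ p x y) (hp1 : ∀ x, ∑ y, p x y = 1)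
    (hinv : ∀ y, ∑ x, μ x * p x y = μ y)
    (hergodic : ∃ k : ℕ, ∀ x y, 0 < (p ^ k) x y)
    (hpq : ∀ x y, 0 < p x y → 0 < q x y) :
    Tendsto (fun n : ℕ =>
      ((1 : ℝ) / n) * ∑ x : Fin (n + 1) → Ω,
        (ρ (x 0) * ∏ i : Fin n, p (x i.castSucc) (x i.succ)) *
          Real.log ((ρ (x 0) * ∏ i : Fin n, p (x i.castSucc) (x i.succ)) /
            (ρ (x 0) * ∏ i : Fin n, q (x i.castSucc) (x i.succ))))
      atTop (𝓝 (∑ x, ∑ y, μ x * p x y * Real.log (p x y / q x y))) := by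
  obtain ⟨k, hk⟩ := hergodic
  have hp : p ∈ rowStochastic ℝ Ω := mem_rowStochastic_iff_sum.2 ⟨hp0, hp1⟩
  have hmarginal := tendsto_vecMul_pow hp hk (funext hinv) (hρ1.trans hμ1.symm)
  have hstep : Tendsto (fun i => ∑ a, ∑ b, (ρ ᵥ* p ^ i) a * p a b * Real.log (p a b / q a b))
      atTop (𝓝 (∑ x, ∑ y, μ x * p x y * Real.log (p x y / q x y))) :=
    tendsto_finsetSum _ fun a _ => tendsto_finsetSum _ fun b _ =>
      ((tendsto_pi_nhds.1 hmarginal a).mul_const _).mul_const _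
  refine hstep.cesaro.congr fun n => ?_
  rw [one_div, ← sum_pathWeight_mul_sum_steps p hp1]
  exact congrArg _ (sum_congr rfl fun x _ => (pathWeight_mul_log_div hp0 hpq ρ x).symm)

/-- Relative entropy rate of Markov chains: for an ergodic finite-state Markov chain with
transition matrix `p`, invariant distribution `μ` and initial distribution `ρ`, and a second
chain with transition matrix `q` (with `q > 0` wherever `p > 0`) and the same initial
distribution, the normalized relative entropy of the path measures converges to
`Σ_{x,y} μ(x) p(x,y) log(p(x,y)/q(x,y))`. -/
theorem markov_relative_entropy_rate
    {Ω : Type*} [Fintype Ω] [DecidableEq Ω] [Nonempty Ω]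
    (p q : Matrix Ω Ω ℝ) (ρ μ : Ω → ℝ)
    (hρ0 : ∀ x, 0 ≤ ρ x) (hρ1 : ∑ x, ρ x = 1)
    (hμ0 : ∀ x, 0 ≤ μ x) (hμ1 : ∑ x, μ x = 1)
    (hp0 : ∀ x y, 0 ≤ p x y) (hp1 : ∀ x, ∑ y, p x y = 1)
    (hq0 : ∀ x y, 0 ≤ q x y) (hq1 : ∀ x, ∑ y, q x y = 1)
    (hinv : ∀ y, ∑ x, μ x * p x y = μ y)
    (hergodic : ∃ k : ℕ, ∀ x y, 0 < (p ^ k) x y)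
    (hpq : ∀ x y, 0 < p x y → 0 < q x y) :
    Tendsto (fun n : ℕ =>
      ((1 : ℝ) / n) * ∑ x : Fin (n + 1) → Ω,
        (ρ (x 0) * ∏ i : Fin n, p (x i.castSucc) (x i.succ)) *
          Real.log ((ρ (x 0) * ∏ i : Fin n, p (x i.castSucc) (x i.succ)) /
            (ρ (x 0) * ∏ i : Fin n, q (x i.castSucc) (x i.succ))))
      atTop (𝓝 (∑ x, ∑ y, μ x * p x y * Real.log (p x y / q x y))) :=
  markov_relative_entropy_rate_general p q ρ μ hρ1 hμ1 hp0 hp1 hinv hergodic hpq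
end
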